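/- arXiv:1610.02073 — 3 statements merged into one kernel-verified Lean document; each statement's English description precedes it below -/
import Mathlib

section
/- Over any ring A, an A-module that is both Gorenstein projective and of finite projective dimension is projective. -/
open CategoryTheory CategoryTheory.Limits

universe v u

variable (C : Type u) [Category.{v} C] [Abelian C]

/-- A totally acyclic complex of projectives. -/
def IsTotallyAcyclicProjComplex (P : ChainComplex C (ℤ)) : Prop :=
  (∀ n, Projective (P.X n)) ∧ (∀ n, P.ExactAt n) ∧
    ∀ (Q : C), Projective Q → ∀ (n : ℤ) (f : P.X n ⟶ Q), P.d (n + 1) n ≫ f = 0 →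
      ∃ g : P.X (n - 1) ⟶ Q, P.d n (n - 1) ≫ g = f

/-- A totally acyclic complex of injectives. -/
def IsTotallyAcyclicInjComplex (I : ChainComplex C (ℤ)) : Prop :=
  (∀ n, Injective (I.X n)) ∧ (∀ n, I.ExactAt n) ∧
    ∀ (E : C), Injective E → ∀ (n : ℤ) (f : E ⟶ I.X n), f ≫ I.d n (n - 1) = 0 →
      ∃ g : E ⟶ I.X (n + 1), g ≫ I.d (n + 1) n = f

variable {C}

/-- Gorenstein projective object: a cycle of a totally acyclic complex of projectives. -/
def IsGorensteinProjective (G : C) : Prop :=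
  ∃ P : ChainComplex C (ℤ), IsTotallyAcyclicProjComplex C P ∧ ∃ j : ℤ, Nonempty (G ≅ P.cycles j)

/-- Gorenstein injective object: a cycle of a totally acyclic complex of injectives. -/
def IsGorensteinInjective (H : C) : Prop :=
  ∃ I : ChainComplex C (ℤ), IsTotallyAcyclicInjComplex C I ∧ ∃ j : ℤ, Nonempty (H ≅ I.cycles j)

/-- `0 → X → Y → Z → 0` is a short exact sequence. -/
def IsShortExactSeq {X Y Z : C} (f : X ⟶ Y) (g : Y ⟶ Z) : Prop :=
  ∃ w : f ≫ g = 0, (ShortComplex.mk f g w).ShortExact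

/-- Projective dimension at most `n`. -/
def pdLE : ℕ → C → Prop
  | 0, M => Projective M
  | n + 1, M => ∃ (K P : C) (f : K ⟶ P) (g : P ⟶ M),
      IsShortExactSeq f g ∧ Projective P ∧ pdLE n K

/-- Injective dimension at most `n`. -/
def idLE : ℕ → C → Prop
  | 0, M => Injective M
  | n + 1, M => ∃ (J L : C) (f : M ⟶ J) (g : J ⟶ L),
      IsShortExactSeq f g ∧ Injective J ∧ idLE n L

/-- Gorenstein projective dimension at most `n`. -/
def gpdLE : ℕ → C → Prop
  | 0, M => IsGorensteinProjective M
  | n + 1, M => ∃ (K G : C) (f : K ⟶ G) (g : G ⟶ M),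
      IsShortExactSeq f g ∧ IsGorensteinProjective G ∧ gpdLE n K

/-- Gorenstein injective dimension at most `n`. -/
def gidLE : ℕ → C → Prop
  | 0, M => IsGorensteinInjective M
  | n + 1, M => ∃ (H L : C) (f : M ⟶ H) (g : H ⟶ L),
      IsShortExactSeq f g ∧ IsGorensteinInjective H ∧ gidLE n L

/-- Vanishing of `Ext^i` in the category of `A`-modules. -/
def extVanish (A : Type u) [Ring A] (X Y : ModuleCat.{u} A) (i : ℕ) : Prop :=
  Subsingleton (((Ext ℤ (ModuleCat.{u} A) i).obj (Opposite.op X)).obj Y)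

/-!
Write `Z_j` for the cycles of a totally acyclic complex of projectives `P`, so that
`0 → Z_{j+1} → P_{j+1} → Z_j → 0` is exact. Total acyclicity says that every map from some `Z_j`
to a projective `Q` extends over `P_j`, i.e. `Ext¹(Z_j, Q) = 0` for all `j`; dimension shifting
along a projective resolution gives `Ext¹(Z_j, K) = 0` for every `K` of finite projective
dimension. If `G ≅ Z_j` and `0 → K → Q → G → 0` with `Q` projective and `pd K < ∞`, this vanishing
lifts `G ≅ Z_j` to `Q`, so `G` is a retract of `Q`.
-/

namespace HomologicalComplex

variable {ι : Type*} {c : ComplexShape ι} (K : HomologicalComplex C c) {i j : ι}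

lemma iCycles_toCycles : K.iCycles i ≫ K.toCycles i j = 0 := by
  rw [← cancel_mono (K.iCycles j), Category.assoc, toCycles_i, iCycles_d, zero_comp]

lemma shortExact_iCycles_toCycles (hij : c.Rel i j) (hj : K.ExactAt j) :
    (ShortComplex.mk _ _ (K.iCycles_toCycles (i := i) (j := j))).ShortExact where
  exact := by
    refine ShortComplex.exact_of_f_is_kernel _ <|
      KernelFork.isLimitOfIsLimitOfIff' (K.cyclesIsKernel i j (c.next_eq' hij)) _ fun _ φ => ?_
    rw [← toCycles_i, ← Category.assoc]
    exact ⟨zero_of_comp_mono _, fun h => by rw [h, zero_comp]⟩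
  epi_g := by
    have := ((K.exactAt_iff' i j (c.next j) (c.prev_eq' hij) rfl).1 hj).epi_toCycles
    rw [← K.toCycles_cyclesIsoSc'_hom i j (c.next j) (c.prev_eq' hij) rfl] at this
    exact (epi_comp_iff_of_isIso _ _).1 this

end HomologicalComplex

/-- For `P` exact with projective terms, this says `Ext¹(P.cycles j, K) = 0` for all `j`. -/
def ExtendsFromCycles (P : ChainComplex C ℤ) (K : C) : Prop :=
  ∀ (j : ℤ) (γ : P.cycles j ⟶ K), ∃ ψ : P.X j ⟶ K, P.iCycles j ≫ ψ = γ

/-- Dimension shifting: `Ext¹(Z_j, K') = 0` makes `Hom(Z_j, Q) → Hom(Z_j, K)` surjective. -/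
lemma exists_lift_of_extendsFromCycles {P : ChainComplex C ℤ} (hproj : ∀ n, Projective (P.X n))
    (hexact : ∀ n, P.ExactAt n) {K' Q K : C} {a : K' ⟶ Q} {b : Q ⟶ K}
    (hab : IsShortExactSeq a b) (hK' : ExtendsFromCycles P K') (j : ℤ) (γ : P.cycles j ⟶ K) :
    ∃ s : P.cycles j ⟶ Q, s ≫ b = γ := by
  obtain ⟨w, hab⟩ := hab
  have hZ := P.shortExact_iCycles_toCycles (i := j + 1) (j := j) rfl (hexact j)
  have := hZ.epi_g
  have := hab.mono_f
  have := hab.epi_g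
  have := hproj (j + 1)
  obtain ⟨h, hh⟩ : ∃ h : P.X (j + 1) ⟶ Q, h ≫ b = P.toCycles (j + 1) j ≫ γ :=
    ⟨Projective.factorThru _ b, Projective.factorThru_comp _ _⟩
  obtain ⟨φ, hφ⟩ := hab.exact.lift' (P.iCycles (j + 1) ≫ h)
    (by rw [Category.assoc, hh, ← Category.assoc, P.iCycles_toCycles, zero_comp])
  obtain ⟨ψ, hψ⟩ := hK' (j + 1) φ
  obtain ⟨s, hs⟩ : ∃ s, P.toCycles (j + 1) j ≫ s = h - ψ ≫ a :=
    ⟨_, hZ.exact.g_desc (h - ψ ≫ a)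
      (by rw [Preadditive.comp_sub, ← Category.assoc, hψ]; exact sub_eq_zero.2 hφ.symm)⟩
  refine ⟨s, ?_⟩
  rw [← cancel_epi (P.toCycles (j + 1) j), reassoc_of% hs, Preadditive.sub_comp, hh,
    Category.assoc, w, comp_zero, sub_zero]

namespace IsTotallyAcyclicProjComplex

variable {P : ChainComplex C ℤ}

lemma exists_d_comp_eq (hP : IsTotallyAcyclicProjComplex C P) {Q : C} (hQ : Projective Q)
    (j : ℤ) (f : P.X (j + 1) ⟶ Q) (hf : P.d (j + 1 + 1) (j + 1) ≫ f = 0) :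
    ∃ g : P.X j ⟶ Q, P.d (j + 1) j ≫ g = f := by
  obtain ⟨g, hg⟩ := hP.2.2 Q hQ (j + 1) f hf
  exact ⟨(P.XIsoOfEq (add_sub_cancel_right j 1).symm).hom ≫ g, by
    rw [← Category.assoc, P.d_comp_XIsoOfEq_hom, hg]⟩

lemma extendsFromCycles_of_projective (hP : IsTotallyAcyclicProjComplex C P) {Q : C}
    (hQ : Projective Q) : ExtendsFromCycles P Q := by
  intro j γ
  have := (P.shortExact_iCycles_toCycles (i := j + 1) (j := j) rfl (hP.2.1 j)).epi_g
  obtain ⟨ψ, hψ⟩ := hP.exists_d_comp_eq hQ j (P.toCycles (j + 1) j ≫ γ)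
    (by rw [P.d_toCycles_assoc, zero_comp])
  refine ⟨ψ, ?_⟩
  rw [← cancel_epi (P.toCycles (j + 1) j), P.toCycles_i_assoc, hψ]

lemma extendsFromCycles_of_pdLE (hP : IsTotallyAcyclicProjComplex C P) {m : ℕ} {K : C}
    (hK : pdLE m K) : ExtendsFromCycles P K := by
  induction m generalizing K with
  | zero => exact hP.extendsFromCycles_of_projective hK
  | succ m ih =>
    obtain ⟨K', Q, a, b, hab, hQ, hK'⟩ := hK
    intro j γ
    obtain ⟨s, rfl⟩ := exists_lift_of_extendsFromCycles hP.1 hP.2.1 hab (ih hK') j γ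
    obtain ⟨ψ, rfl⟩ := hP.extendsFromCycles_of_projective hQ j s
    exact ⟨ψ ≫ b, by rw [Category.assoc]⟩

end IsTotallyAcyclicProjComplex

/-- A Gorenstein projective module of finite projective dimension is projective. -/
theorem projective_of_gorensteinProjective_of_finite_pd {A : Type u} [Ring A]
    (G : ModuleCat.{u} A) (hG : IsGorensteinProjective G)
    (hpd : ∃ n : ℕ, pdLE n G) :
    CategoryTheory.Projective G := by
  obtain ⟨P, hP, j, ⟨e⟩⟩ := hG
  obtain ⟨_ | m, hpd⟩ := hpd
  · exact hpd
  obtain ⟨K, Q, a, b, hab, hQ, hK⟩ := hpd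
  obtain ⟨s, hs⟩ :=
    exists_lift_of_extendsFromCycles hP.1 hP.2.1 hab (hP.extendsFromCycles_of_pdLE hK) j e.inv
  exact Retract.projective (p := hQ) ⟨e.hom ≫ s, b, by rw [Category.assoc, hs, e.hom_inv_id]⟩
end

section
/- Over any ring A, an A-module that is both Gorenstein injective and of finite injective dimension is injective. -/
open CategoryTheory CategoryTheory.Limits

universe v u

variable (C : Type u) [Category.{v} C] [Abelian C]

variable {C}

/-!
Write the Gorenstein injective `G` as a cycle object `Z_j` of a totally acyclic complex of
injectives `I`, glued from short exact sequences `0 → Z_j → I_j → Z_{j-1} → 0`. For `E` injective,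
`Hom(E, I_j) → Hom(E, Z_{j-1})` is onto, so `Ext¹(E, Z_j) = 0`, and dimension shifting along these
sequences gives `Extⁱ(E, G) = 0` for `i ≥ 1`. Shifting along an injective coresolution of `L` then
gives `Extⁱ(L, G) = 0` for `i ≥ 1` whenever `L` has finite injective dimension.
If `id H < ∞`, choose `0 → H → J → L → 0` with `J` injective and `id L < ∞`. Its class in
`Ext¹(L, H)` vanishes, and since `Ext¹(Y, J) = 0` every class in `Ext¹(Y, H)` is a pullback of that
class, so `Ext¹(-, H) = 0` and `H` is injective.
-/

universe w

open Abelian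

namespace HomologicalComplex

variable {ι : Type*} {c : ComplexShape ι} (K : HomologicalComplex C c)

noncomputable abbrev cyclesShortComplex (i j : ι) : ShortComplex C :=
  ShortComplex.mk (K.iCycles i) (K.toCycles i j) (by simp [← cancel_mono (K.iCycles j)])

lemma shortExact_cyclesShortComplex {i j : ι} (hij : c.Rel i j) (hj : K.ExactAt j) :
    (K.cyclesShortComplex i j).ShortExact where
  exact := ShortComplex.exact_of_f_is_kernel _ <|
    isKernelOfComp (K.iCycles j) (K.d i j) (K.cyclesIsKernel i j (c.next_eq' hij)) _
      (K.toCycles_i i j)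
  mono_f := inferInstanceAs (Mono (K.iCycles i))
  epi_g := by
    obtain rfl := c.prev_eq' hij
    exact hj.epi_toCycles

end HomologicalComplex

namespace IsTotallyAcyclicInjComplex

variable {I : ChainComplex C ℤ} (hI : IsTotallyAcyclicInjComplex C I)
include hI

lemma exists_comp_toCycles_eq {E : C} [Injective E] {n m : ℤ} (hnm : m + 1 = n)
    (f : E ⟶ I.cycles m) : ∃ g : E ⟶ I.X n, g ≫ I.toCycles n m = f := by
  subst hnm
  obtain ⟨g, hg⟩ := hI.2.2 E ‹_› m (f ≫ I.iCycles m) (by simp)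
  exact ⟨g, by rw [← cancel_mono (I.iCycles m), Category.assoc, I.toCycles_i, hg]⟩

variable [HasExt.{w} C]

lemma ext_cycles_eq_zero {E : C} [Injective E] (i : ℕ) (j : ℤ)
    (e : Ext E (I.cycles j) (i + 1)) : e = 0 := by
  have hS := I.shortExact_cyclesShortComplex
    (show (ComplexShape.down ℤ).Rel j (j - 1) by simp) (hI.2.1 (j - 1))
  have := hI.1 j
  obtain ⟨x, rfl⟩ := Ext.covariant_sequence_exact₁ E hS e (Ext.eq_zero_of_injective _) rfl
  cases i with
  | zero =>
    obtain ⟨f, rfl⟩ := (Ext.mk₀_bijective _ _).2 x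
    obtain ⟨g, rfl⟩ := hI.exists_comp_toCycles_eq (sub_add_cancel j 1) f
    rw [← Ext.mk₀_comp_mk₀_assoc, hS.comp_extClass, Ext.comp_zero]
  | succ i => rw [ext_cycles_eq_zero i (j - 1) x, Ext.zero_comp]

end IsTotallyAcyclicInjComplex

section Ext

variable [HasExt.{w} C]

lemma IsGorensteinInjective.ext_eq_zero {G E : C} (hG : IsGorensteinInjective G) [Injective E]
    {i : ℕ} (e : Ext E G (i + 1)) : e = 0 := by
  obtain ⟨I, hI, j, ⟨φ⟩⟩ := hG
  rw [← e.comp_mk₀_id, ← φ.hom_inv_id, ← Ext.mk₀_comp_mk₀, ← Ext.comp_assoc_of_second_deg_zero,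
    hI.ext_cycles_eq_zero i j (e.comp (Ext.mk₀ φ.hom) (add_zero _)), Ext.zero_comp]

lemma ext_eq_zero_of_idLE {G : C}
    (hG : ∀ (E : C) [Injective E] (i : ℕ) (e : Ext E G (i + 1)), e = 0) :
    ∀ (n : ℕ) {L : C}, idLE n L → ∀ (i : ℕ) (e : Ext L G (i + 1)), e = 0
  | 0, L, hL, i, e => by
    have : Injective L := hL
    exact hG L i e
  | n + 1, _, ⟨J, _, _, _, ⟨_, hS⟩, hJ, hL'⟩, i, e => by
    have := hJ
    obtain ⟨x, rfl⟩ := Ext.contravariant_sequence_exact₁ hS G e (add_comm 1 (i + 1))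
      (ext_eq_zero_of_idLE hG n hL' (i + 1) _)
    rw [hG J i x, Ext.comp_zero]

lemma CategoryTheory.ShortComplex.ShortExact.injective_X₁_of_extClass_eq_zero
    {S : ShortComplex C} (hS : S.ShortExact) [Injective S.X₂] (h : hS.extClass = 0) :
    Injective S.X₁ := by
  rw [injective_iff_subsingleton_ext_one.{w}]
  refine fun Y => subsingleton_of_forall_eq 0 fun e => ?_
  obtain ⟨x, rfl⟩ := Ext.covariant_sequence_exact₁ Y hS e (Ext.eq_zero_of_injective _)
    (zero_add 1)
  rw [h, Ext.comp_zero]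

end Ext

lemma IsGorensteinInjective.injective_of_idLE {G : C} (hG : IsGorensteinInjective G) :
    ∀ {n : ℕ}, idLE n G → Injective G
  | 0, h => h
  | n + 1, ⟨_, _, _, _, ⟨_, hS⟩, hJ, hL⟩ => by
    let := HasExt.standard C
    have := hJ
    exact hS.injective_X₁_of_extClass_eq_zero
      (ext_eq_zero_of_idLE (fun _ _ _ e => hG.ext_eq_zero e) n hL 0 _)

/-- A Gorenstein injective module of finite injective dimension is injective. -/
theorem injective_of_gorensteinInjective_of_finite_id {A : Type u} [Ring A]
    (H : ModuleCat.{u} A) (hH : IsGorensteinInjective H)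
    (hid : ∃ n : ℕ, idLE n H) :
    CategoryTheory.Injective H := by
  obtain ⟨n, hn⟩ := hid
  exact hH.injective_of_idLE hn
end

section
/- Over any ring A, the class of Gorenstein projective A-modules is closed under extensions: if 0 → G' → G → G'' → 0 is a short exact sequence with G' and G'' Gorenstein projective, then G is Gorenstein projective. -/
open CategoryTheory CategoryTheory.Limits

universe v u

variable (C : Type u) [Category.{v} C] [Abelian C]

variable {C}

namespace GPHelp

variable {A : Type u} [Ring A]

lemma next_down (i : ℤ) : (ComplexShape.down ℤ).next i = i - 1 :=
  (ComplexShape.down ℤ).next_eq' (show (i-1)+1 = i by omega)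

lemma prev_down (i : ℤ) : (ComplexShape.down ℤ).prev i = i + 1 :=
  (ComplexShape.down ℤ).prev_eq' (show i + 1 = i + 1 from rfl)

noncomputable def cyclesIsoKer (K : ChainComplex (ModuleCat.{u} A) ℤ) (i : ℤ) :
    K.cycles i ≅ ModuleCat.of A (LinearMap.ker (K.d i (i-1)).hom) :=
  (ShortComplex.cyclesMapIso (K.isoSc' (i+1) i (i-1) (prev_down i) (next_down i))) ≪≫
    (K.sc' (i+1) i (i-1)).moduleCatCyclesIso

lemma exactAt_iff_elem (K : ChainComplex (ModuleCat.{u} A) ℤ) (i : ℤ) :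
    K.ExactAt i ↔ ∀ x : K.X i, K.d i (i-1) x = 0 →
      ∃ y : K.X (i+1), K.d (i+1) i y = x := by
  rw [K.exactAt_iff' (i+1) i (i-1) (prev_down i) (next_down i)]
  exact (K.sc' (i+1) i (i-1)).moduleCat_exact_iff

lemma d_d_apply (K : ChainComplex (ModuleCat.{u} A) ℤ) (i j k : ℤ) (x : K.X i) :
    K.d j k (K.d i j x) = 0 :=
  congrArg (fun φ : K.X i ⟶ K.X k => φ x) (K.d_comp_d i j k)

lemma d_apply_congr {K : ChainComplex (ModuleCat.{u} A) ℤ} {i j j' : ℤ} (h : j = j')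
    (x : K.X i) : K.d i j x = 0 ↔ K.d i j' x = 0 := by subst h; rfl

lemma exists_d_eq_congr {K : ChainComplex (ModuleCat.{u} A) ℤ} {i i' j : ℤ} (h : i = i')
    (x : K.X j) : (∃ y : K.X i, K.d i j y = x) ↔ (∃ y : K.X i', K.d i' j y = x) := by
  subst h; rfl

lemma exists_comp_congr {K : ChainComplex (ModuleCat.{u} A) ℤ} {E : ModuleCat.{u} A}
    {i j j' : ℤ} (h : j = j') (f : K.X i ⟶ E) :
    (∃ g : K.X j ⟶ E, K.d i j ≫ g = f) → ∃ g : K.X j' ⟶ E, K.d i j' ≫ g = f := by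
  subst h; exact id

lemma d_comp_zero_congr {K : ChainComplex (ModuleCat.{u} A) ℤ} {E : ModuleCat.{u} A}
    {i i' j : ℤ} (h : i = i') (f : K.X j ⟶ E) :
    K.d i j ≫ f = 0 → K.d i' j ≫ f = 0 := by subst h; exact id

noncomputable def kerEquivOfEq (K : ChainComplex (ModuleCat.{u} A) ℤ) {i i' j j' : ℤ}
    (hi : i = i') (hj : j = j') :
    (LinearMap.ker (K.d i j).hom : Submodule A (K.X i)) ≃ₗ[A] LinearMap.ker (K.d i' j').hom := by
  subst hi; subst hj; exact LinearEquiv.refl _ _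

/-- Shift of a chain complex. -/
@[simps] def shiftC (K : ChainComplex (ModuleCat.{u} A) ℤ) (a : ℤ) :
    ChainComplex (ModuleCat.{u} A) ℤ where
  X n := K.X (n + a)
  d i j := K.d (i + a) (j + a)
  shape i j hij := K.shape _ _ (fun h => hij (show j + 1 = i by
    have : (j + a) + 1 = i + a := h
    omega))
  d_comp_d' i j k _ _ := K.d_comp_d _ _ _

/-- Factoring a linear map through a surjection. -/
lemma factor_thru_surj {M N E : Type u} [AddCommGroup M] [AddCommGroup N] [AddCommGroup E]
    [Module A M] [Module A N] [Module A E] (f : M →ₗ[A] N) (hf : Function.Surjective f)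
    (v : M →ₗ[A] E) (hle : LinearMap.ker f ≤ LinearMap.ker v) :
    ∃ s : N →ₗ[A] E, s ∘ₗ f = v := by
  refine ⟨((LinearMap.ker f).liftQ v hle) ∘ₗ
    (f.quotKerEquivOfSurjective hf).symm.toLinearMap, ?_⟩
  ext y
  have h1 : (f.quotKerEquivOfSurjective hf).symm (f y) = Submodule.Quotient.mk y := by
    rw [LinearEquiv.symm_apply_eq]
    simp [LinearMap.quotKerEquivOfSurjective]
  simp [h1]

end GPHelp

namespace GPHelp

lemma ta_shift {A : Type u} [Ring A] {K : ChainComplex (ModuleCat.{u} A) ℤ}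
    (hK : IsTotallyAcyclicProjComplex (ModuleCat.{u} A) K) (a : ℤ) :
    IsTotallyAcyclicProjComplex (ModuleCat.{u} A) (shiftC K a) := by
  obtain ⟨hproj, hex, hlift⟩ := hK
  refine ⟨fun n => hproj (n+a), fun n => ?_, fun E hE n f hf => ?_⟩
  · rw [exactAt_iff_elem]
    intro x hx
    have hx0 : K.d (n+a) (n-1+a) x = 0 := hx
    have hx' : K.d (n+a) (n+a-1) x = 0 := (d_apply_congr (K := K) (by omega) x).mp hx0
    obtain ⟨y, hy⟩ := (exactAt_iff_elem K (n+a)).mp (hex (n+a)) x hx'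
    have hres : ∃ y : K.X (n+1+a), K.d (n+1+a) (n+a) y = x :=
      (exists_d_eq_congr (K := K) (show n+a+1 = n+1+a by omega) x).mp ⟨y, hy⟩
    exact hres
  · have hf0 : K.d (n+1+a) (n+a) ≫ f = 0 := hf
    have hf' : K.d (n+a+1) (n+a) ≫ f = 0 := d_comp_zero_congr (K := K) (by omega) f hf0
    obtain ⟨g, hg⟩ := hlift E hE (n+a) f hf'
    have hres : ∃ g : K.X (n-1+a) ⟶ E, K.d (n+a) (n-1+a) ≫ g = f :=
      exists_comp_congr (K := K) (show n+a-1 = n-1+a by omega) f ⟨g, hg⟩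
    exact hres

lemma gp_iff_ker {A : Type u} [Ring A] (G : ModuleCat.{u} A) :
    IsGorensteinProjective G ↔ ∃ P : ChainComplex (ModuleCat.{u} A) ℤ,
      IsTotallyAcyclicProjComplex (ModuleCat.{u} A) P ∧
      Nonempty (G ≃ₗ[A] LinearMap.ker (P.d 0 (-1)).hom) := by
  constructor
  · rintro ⟨P, hP, j, ⟨e⟩⟩
    refine ⟨shiftC P j, ta_shift hP j, ⟨?_⟩⟩
    have e1 : G ≃ₗ[A] LinearMap.ker (P.d j (j-1)).hom :=
      (e ≪≫ cyclesIsoKer P j).toLinearEquiv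
    exact e1 ≪≫ₗ kerEquivOfEq P (show j = 0 + j by omega) (show j - 1 = -1 + j by omega)
  · rintro ⟨P, hP, ⟨e⟩⟩
    exact ⟨P, hP, 0, ⟨e.toModuleIso ≪≫ (cyclesIsoKer P 0).symm⟩⟩

/-- Two-sided chain of choices over ℤ. -/
lemma int_chain {T : ℤ → Sort*} (J : ∀ n, T n → Prop)
    (C : ∀ n, T n → T (n+1) → Prop)
    (b : T (-1)) (hb : J (-1) b)
    (up : ∀ n (t : T n), J n t → ∃ t' : T (n+1), C n t t' ∧ J (n+1) t')
    (down : ∀ n (t : T (n+1)), J (n+1) t → ∃ t' : T n, C n t' t ∧ J n t') :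
    ∃ θ : ∀ n, T n, (∀ n, C n (θ n) (θ (n+1))) ∧ θ (-1) = b := by
  classical
  let V : ∀ k : ℕ, {t : T (Int.negSucc k) // J (Int.negSucc k) t} := fun k => Nat.rec
    ⟨b, hb⟩
    (fun k ih => ⟨(down (Int.negSucc (k+1)) ih.1 ih.2).choose,
      (down (Int.negSucc (k+1)) ih.1 ih.2).choose_spec.2⟩) k
  let U : ∀ k : ℕ, {t : T (Int.ofNat k) // J (Int.ofNat k) t} := fun k => Nat.rec
    ⟨(up (-1) b hb).choose, (up (-1) b hb).choose_spec.2⟩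
    (fun k ih => ⟨(up (Int.ofNat k) ih.1 ih.2).choose,
      (up (Int.ofNat k) ih.1 ih.2).choose_spec.2⟩) k
  refine ⟨fun n => Int.rec (fun k => (U k).1) (fun k => (V k).1) n, fun n => ?_, rfl⟩
  match n with
  | Int.ofNat k => exact (up (Int.ofNat k) (U k).1 (U k).2).choose_spec.1
  | Int.negSucc 0 => exact (up (-1) b hb).choose_spec.1
  | Int.negSucc (k+1) => exact (down (Int.negSucc (k+1)) (V k).1 (V k).2).choose_spec.1

end GPHelp

set_option maxHeartbeats 2000000 in
/-- The class of Gorenstein projective modules is closed under extensions. -/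
theorem gorensteinProjective_extension_closed {A : Type u} [Ring A]
    {G₁ G G₂ : ModuleCat.{u} A} (f : G₁ ⟶ G) (g : G ⟶ G₂)
    (h : IsShortExactSeq f g)
    (h₁ : IsGorensteinProjective G₁) (h₂ : IsGorensteinProjective G₂) :
    IsGorensteinProjective G := by
  classical
  obtain ⟨P, hP, ⟨eP⟩⟩ := (GPHelp.gp_iff_ker G₁).mp h₁
  obtain ⟨Q, hQ, ⟨eQ⟩⟩ := (GPHelp.gp_iff_ker G₂).mp h₂
  obtain ⟨w, SE⟩ := h
  have hf_inj : Function.Injective f := by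
    rw [← ModuleCat.mono_iff_injective]; exact SE.mono_f
  have hg_surj : Function.Surjective g := by
    rw [← ModuleCat.epi_iff_surjective]; exact SE.epi_g
  have hfg : ∀ y : G, g y = 0 → ∃ a : G₁, f a = y :=
    fun y hy => (ShortComplex.mk f g w).moduleCat_exact_iff.mp SE.exact y hy
  have hgf : ∀ a : G₁, g (f a) = 0 := fun a => congrArg (fun φ : G₁ ⟶ G₂ => φ a) w
  have projModP : ∀ n : ℤ, Module.Projective A (P.X n) :=
    fun n => (IsProjective.iff_projective (P.X n)).mpr (hP.1 n)
  have projModQ : ∀ n : ℤ, Module.Projective A (Q.X n) :=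
    fun n => (IsProjective.iff_projective (Q.X n)).mpr (hQ.1 n)
  have exP : ∀ n : ℤ, ∀ x : P.X n, P.d n (n-1) x = 0 →
      ∃ y : P.X (n+1), P.d (n+1) n y = x :=
    fun n => (GPHelp.exactAt_iff_elem P n).mp (hP.2.1 n)
  have exQ : ∀ n : ℤ, ∀ x : Q.X n, Q.d n (n-1) x = 0 →
      ∃ y : Q.X (n+1), Q.d (n+1) n y = x :=
    fun n => (GPHelp.exactAt_iff_elem Q n).mp (hQ.2.1 n)
  set kQ := LinearMap.ker (Q.d 0 (-1)).hom with hkQ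
  let ι₁ : ↥G₁ →ₗ[A] ↥(P.X 0) := (LinearMap.ker (P.d 0 (-1)).hom).subtype ∘ₗ eP.toLinearMap
  have hι₁ : ∀ a, P.d 0 (-1) (ι₁ a) = 0 := fun a => (eP a).2
  have hι₁_inj : Function.Injective ι₁ :=
    (Submodule.injective_subtype _).comp eP.injective
  -- the pushout W
  let s₀ : ↥G₁ →ₗ[A] ↥(P.X 0) × ↥G := LinearMap.prod (-ι₁) f.hom
  set S₀ := LinearMap.range s₀ with hS₀
  let ιW : ↥(P.X 0) →ₗ[A] ((↥(P.X 0) × ↥G) ⧸ S₀) := S₀.mkQ ∘ₗ LinearMap.inl A _ _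
  let jW : ↥G →ₗ[A] ((↥(P.X 0) × ↥G) ⧸ S₀) := S₀.mkQ ∘ₗ LinearMap.inr A _ _
  let π₀ : (↥(P.X 0) × ↥G) →ₗ[A] ↥kQ :=
    (eQ.toLinearMap ∘ₗ g.hom) ∘ₗ LinearMap.snd A _ _
  have hπ₀ : S₀ ≤ LinearMap.ker π₀ := by
    rintro _ ⟨a, rfl⟩
    show eQ (g (f a)) = 0
    rw [hgf a, map_zero]
  let πW : ((↥(P.X 0) × ↥G) ⧸ S₀) →ₗ[A] ↥kQ := S₀.liftQ π₀ hπ₀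
  have hπιW : ∀ x, πW (ιW x) = 0 := by
    intro x
    show eQ (g 0) = 0
    rw [map_zero, map_zero]
  have hιW_ker : ∀ x, ιW x = 0 → x = 0 := by
    intro x hx
    have hx' : ((x, 0) : ↥(P.X 0) × ↥G) ∈ S₀ := (Submodule.Quotient.mk_eq_zero S₀).mp hx
    obtain ⟨a, ha⟩ := hx'
    have ha1 : -ι₁ a = x := congrArg Prod.fst ha
    have ha2 : f a = 0 := congrArg Prod.snd ha
    have ha0 : a = 0 := hf_inj (by rw [ha2, map_zero])
    rw [← ha1, ha0, map_zero, neg_zero]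
  have hιW_inj : Function.Injective ιW := by
    intro x x' hxx
    have := hιW_ker (x - x') (by rw [map_sub, hxx, sub_self])
    exact sub_eq_zero.mp this
  have hexW : ∀ w', πW w' = 0 → ∃ x, ιW x = w' := by
    intro w' hw'
    obtain ⟨⟨x, y⟩, rfl⟩ := Submodule.Quotient.mk_surjective S₀ w'
    have h1 : eQ (g y) = 0 := hw'
    have h2 : g y = 0 := by
      have := congrArg eQ.symm h1
      rwa [eQ.symm_apply_apply, map_zero] at this
    obtain ⟨a, rfl⟩ := hfg y h2
    refine ⟨x + ι₁ a, ?_⟩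
    show Submodule.Quotient.mk (x + ι₁ a, (0 : ↥G)) = Submodule.Quotient.mk (x, f a)
    rw [Submodule.Quotient.eq]
    exact ⟨-a, by simp [s₀, Prod.ext_iff]⟩
  have hπW_surj : Function.Surjective πW := by
    intro z
    obtain ⟨y, hy⟩ := hg_surj (eQ.symm z)
    refine ⟨jW y, ?_⟩
    show eQ (g y) = z
    rw [hy, eQ.apply_symm_apply]
  -- a section of πW
  let p1 : ↥(Q.X 1) →ₗ[A] ↥kQ :=
    (Q.d 1 0).hom.codRestrict kQ
      (fun v => GPHelp.d_d_apply Q 1 0 (-1) v)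
  have hp1_surj : Function.Surjective p1 := by
    rintro ⟨z, hz⟩
    obtain ⟨v, hv⟩ := exQ 0 z hz
    exact ⟨v, Subtype.ext hv⟩
  haveI : Module.Projective A ↥(Q.X 1) := projModQ 1
  obtain ⟨u, hu⟩ := Module.projective_lifting_property πW p1 hπW_surj
  have hu' : ∀ t, πW (u t) = p1 t := fun t => DFunLike.congr_fun hu t
  have hmemc : ∀ v2 : ↥(Q.X 2), u (Q.d 2 1 v2) ∈ LinearMap.range ιW := by
    intro v2
    obtain ⟨x, hx⟩ := hexW (u (Q.d 2 1 v2)) (by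
      rw [hu']
      exact Subtype.ext (GPHelp.d_d_apply Q 2 1 0 v2))
    exact ⟨x, hx⟩
  let eιW := LinearEquiv.ofInjective ιW hιW_inj
  let c : ↥(Q.X 2) →ₗ[A] ↥(P.X 0) :=
    eιW.symm.toLinearMap ∘ₗ
      LinearMap.codRestrict (LinearMap.range ιW)
        (u ∘ₗ (Q.d 2 1).hom) hmemc
  have hc : ∀ v2, ιW (c v2) = u (Q.d 2 1 v2) := by
    intro v2
    have h1 := eιW.apply_symm_apply ⟨u (Q.d 2 1 v2), hmemc v2⟩
    have h2 := congrArg Subtype.val h1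
    rwa [LinearEquiv.ofInjective_apply] at h2
  have hc3 : Q.d (2+1) 2 ≫ (ModuleCat.ofHom c) = 0 := by
    refine ModuleCat.hom_ext <| LinearMap.ext fun v => ?_
    show c (Q.d (2+1) 2 v) = 0
    apply hιW_inj
    rw [hc, map_zero]
    have h0 : Q.d 2 1 (Q.d (2+1) 2 v) = 0 := GPHelp.d_d_apply Q (2+1) 2 1 v
    rw [h0, map_zero]
  obtain ⟨h2', hh2'⟩ := hQ.2.2 (P.X 0) (hP.1 0) 2 (ModuleCat.ofHom c) hc3
  obtain ⟨h1, hh1⟩ := GPHelp.exists_comp_congr (K := Q) (show (2:ℤ)-1 = 1 by norm_num)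
    (ModuleCat.ofHom c) ⟨h2', hh2'⟩
  have hh1' : ∀ t, h1 (Q.d 2 1 t) = c t := fun t => ConcreteCategory.congr_hom hh1 t
  let v1 : ↥(Q.X 1) →ₗ[A] ((↥(P.X 0) × ↥G) ⧸ S₀) :=
    u - ιW ∘ₗ (h1).hom
  have hkerp1 : LinearMap.ker p1 ≤ LinearMap.ker v1 := by
    intro y hy
    have hy0 : Q.d 1 0 y = 0 := congrArg Subtype.val hy
    obtain ⟨t, ht⟩ := exQ 1 y hy0
    have ht' : Q.d 2 1 t = y := ht
    have h3 : v1 (Q.d 2 1 t) = 0 := by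
      show u (Q.d 2 1 t) - ιW (h1 (Q.d 2 1 t)) = 0
      rw [hh1', hc, sub_self]
    show v1 y = 0
    rw [← ht']
    exact h3
  obtain ⟨sec0, hsec0⟩ := GPHelp.factor_thru_surj p1 hp1_surj v1 hkerp1
  have hsec : ∀ z : ↥kQ, πW (sec0 z) = z := by
    intro z
    obtain ⟨t, rfl⟩ := hp1_surj z
    have h1' : sec0 (p1 t) = v1 t := DFunLike.congr_fun hsec0 t
    rw [h1']
    show πW (u t - ιW (h1 t)) = p1 t
    rw [map_sub, hπιW, sub_zero, hu']
  have hmem_r : ∀ w', w' - sec0 (πW w') ∈ LinearMap.range ιW := by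
    intro w'
    obtain ⟨x, hx⟩ := hexW (w' - sec0 (πW w')) (by rw [map_sub, hsec, sub_self])
    exact ⟨x, hx⟩
  let rW : ((↥(P.X 0) × ↥G) ⧸ S₀) →ₗ[A] ↥(P.X 0) :=
    eιW.symm.toLinearMap ∘ₗ
      LinearMap.codRestrict (LinearMap.range ιW) (LinearMap.id - sec0 ∘ₗ πW) hmem_r
  have hrW : ∀ w', ιW (rW w') = w' - sec0 (πW w') := by
    intro w'
    have h1 := eιW.apply_symm_apply ⟨w' - sec0 (πW w'), hmem_r w'⟩
    have h2 := congrArg Subtype.val h1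
    rwa [LinearEquiv.ofInjective_apply] at h2
  let φ : ↥G →ₗ[A] ↥(P.X 0) := rW ∘ₗ jW
  have hφf : ∀ a : ↥G₁, φ (f a) = ι₁ a := by
    intro a
    apply hιW_inj
    show ιW (rW (jW (f a))) = ιW (ι₁ a)
    rw [hrW]
    have hj : jW (f a) = ιW (ι₁ a) := by
      show Submodule.Quotient.mk ((0 : ↥(P.X 0)), f a) = Submodule.Quotient.mk (ι₁ a, (0:↥G))
      rw [Submodule.Quotient.eq]
      exact ⟨a, by simp [s₀, Prod.ext_iff]⟩
    rw [hj, hπιW, map_zero, sub_zero]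
  -- τ and θb
  let ψ : ↥G →ₗ[A] ↥(P.X (-1)) := (P.d 0 (-1)).hom ∘ₗ φ
  have hkerψ : LinearMap.ker g.hom ≤ LinearMap.ker ψ := by
    intro y hy
    obtain ⟨a, rfl⟩ := hfg y hy
    show P.d 0 (-1) (φ (f a)) = 0
    rw [hφf a]
    exact hι₁ a
  obtain ⟨τ, hτ0⟩ := GPHelp.factor_thru_surj g.hom hg_surj ψ hkerψ
  have hτ : ∀ y, τ (g y) = ψ y := fun y => DFunLike.congr_fun hτ0 y
  have hdτ : ∀ (k : ℤ) (z : ↥G₂), P.d (-1) k (τ z) = 0 := by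
    intro k z
    obtain ⟨y, rfl⟩ := hg_surj z
    rw [hτ y]
    exact GPHelp.d_d_apply P 0 (-1) k (φ y)
  let fτ : Q.X 1 ⟶ P.X (-1) :=
    ModuleCat.ofHom (τ ∘ₗ eQ.symm.toLinearMap ∘ₗ p1 : ↥(Q.X 1) →ₗ[A] ↥(P.X (-1)))
  have hfτ : Q.d (1+1) 1 ≫ fτ = 0 := by
    refine ModuleCat.hom_ext <| LinearMap.ext fun t => ?_
    show τ (eQ.symm (p1 (Q.d (1+1) 1 t))) = 0
    have h0 : p1 (Q.d (1+1) 1 t) = 0 := Subtype.ext (GPHelp.d_d_apply Q (1+1) 1 0 t)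
    rw [h0, map_zero, map_zero]
  obtain ⟨θb', hθb'⟩ := hQ.2.2 (P.X (-1)) (hP.1 (-1)) 1 fτ hfτ
  obtain ⟨θb, hθb⟩ := GPHelp.exists_comp_congr (K := Q) (show (1:ℤ)-1 = 0 by norm_num)
    fτ ⟨θb', hθb'⟩
  have hθb_d : ∀ t, θb (Q.d 1 0 t) = τ (eQ.symm (p1 t)) := fun t => ConcreteCategory.congr_hom hθb t
  have hθb_ker : ∀ (z : ↥(Q.X 0)) (hz : Q.d 0 (-1) z = 0), θb z = τ (eQ.symm ⟨z, hz⟩) := by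
    intro z hz
    obtain ⟨t, ht⟩ := exQ 0 z hz
    have ht' : Q.d 1 0 t = z := ht
    have hp : p1 t = ⟨z, hz⟩ := Subtype.ext ht'
    conv_lhs => rw [← ht']
    rw [hθb_d, hp]
  -- the two-sided family of homotopy-like maps
  let T : ℤ → Type u := fun n => (Q.X (n+1) ⟶ P.X n)
  let Jp : ∀ n, T n → Prop := fun n t => ∀ k : ℤ, (Q.d (n+1+1) (n+1) ≫ t) ≫ P.d n k = 0
  let Cp : ∀ n, T n → T (n+1) → Prop := fun n t t' =>
    Q.d (n+1+1) (n+1) ≫ t + t' ≫ P.d (n+1) n = 0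
  have hb : Jp (-1) (show T (-1) from θb) := by
    intro k
    refine ModuleCat.hom_ext <| LinearMap.ext fun t => ?_
    show P.d (-1) k (θb (Q.d 1 0 t)) = 0
    rw [hθb_d, hdτ]
  have upStep : ∀ (n : ℤ) (t : T n), Jp n t → ∃ t' : T (n+1), Cp n t t' ∧ Jp (n+1) t' := by
    intro n t ht
    haveI : Module.Projective A ↥(Q.X (n+1+1)) := projModQ (n+1+1)
    let cmap : ↥(Q.X (n+1+1)) →ₗ[A] ↥(P.X n) :=
      -((t).hom ∘ₗ
        (Q.d (n+1+1) (n+1)).hom)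
    have hcmem : ∀ x, cmap x ∈ LinearMap.ker (P.d n (n-1)).hom := by
      intro x
      have h0 : P.d n (n-1) (t (Q.d (n+1+1) (n+1) x)) = 0 := ConcreteCategory.congr_hom (ht (n-1)) x
      show P.d n (n-1) (-(t (Q.d (n+1+1) (n+1) x))) = 0
      rw [map_neg, h0, neg_zero]
    let dk : ↥(P.X (n+1)) →ₗ[A] ↥(LinearMap.ker (P.d n (n-1)).hom) :=
      (P.d (n+1) n).hom.codRestrict _
        (fun x => GPHelp.d_d_apply P (n+1) n (n-1) x)
    have hdk_surj : Function.Surjective dk := by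
      rintro ⟨x, hx⟩
      obtain ⟨y, hy⟩ := exP n x hx
      exact ⟨y, Subtype.ext hy⟩
    obtain ⟨t', ht'⟩ := Module.projective_lifting_property dk
      (cmap.codRestrict _ hcmem) hdk_surj
    have ht'' : ∀ x, P.d (n+1) n (t' x) = cmap x :=
      fun x => congrArg Subtype.val (DFunLike.congr_fun ht' x)
    refine ⟨ModuleCat.ofHom t', ?_, ?_⟩
    · refine ModuleCat.hom_ext <| LinearMap.ext fun x => ?_
      show t (Q.d (n+1+1) (n+1) x) + P.d (n+1) n (t' x) = 0
      rw [ht'']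
      show t (Q.d (n+1+1) (n+1) x) + -(t (Q.d (n+1+1) (n+1) x)) = 0
      rw [add_neg_cancel]
    · intro k
      refine ModuleCat.hom_ext <| LinearMap.ext fun y => ?_
      show P.d (n+1) k (t' (Q.d (n+1+1+1) (n+1+1) y)) = 0
      by_cases hk : k = n
      · rw [hk, ht'']
        show -(t (Q.d (n+1+1) (n+1) (Q.d (n+1+1+1) (n+1+1) y))) = 0
        rw [GPHelp.d_d_apply Q (n+1+1+1) (n+1+1) (n+1) y, map_zero, neg_zero]
      · have hzero : P.d (n+1) k = 0 := P.shape (n+1) k (fun hrel => hk (by have h5 : k + 1 = n + 1 := hrel; omega))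
        rw [hzero]
        rfl
  have downStep : ∀ (n : ℤ) (t : T (n+1)), Jp (n+1) t → ∃ t' : T n, Cp n t' t ∧ Jp n t' := by
    intro n t ht
    let cmap : Q.X (n+1+1) ⟶ P.X n := -(t ≫ P.d (n+1) n)
    have hc0 : Q.d (n+1+1+1) (n+1+1) ≫ cmap = 0 := by
      refine ModuleCat.hom_ext <| LinearMap.ext fun y => ?_
      show -(P.d (n+1) n (t (Q.d (n+1+1+1) (n+1+1) y))) = 0
      have h0 : P.d (n+1) n (t (Q.d (n+1+1+1) (n+1+1) y)) = 0 := ConcreteCategory.congr_hom (ht n) y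
      rw [h0, neg_zero]
    obtain ⟨t0, ht0⟩ := hQ.2.2 (P.X n) (hP.1 n) (n+1+1) cmap hc0
    obtain ⟨t', ht'⟩ := GPHelp.exists_comp_congr (K := Q) (show n+1+1-1 = n+1 by omega)
      cmap ⟨t0, ht0⟩
    have ht'e : ∀ y, t' (Q.d (n+1+1) (n+1) y) = -(P.d (n+1) n (t y)) :=
      fun y => ConcreteCategory.congr_hom ht' y
    refine ⟨t', ?_, ?_⟩
    · refine ModuleCat.hom_ext <| LinearMap.ext fun y => ?_
      show t' (Q.d (n+1+1) (n+1) y) + P.d (n+1) n (t y) = 0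
      rw [ht'e, neg_add_cancel]
    · intro k
      refine ModuleCat.hom_ext <| LinearMap.ext fun y => ?_
      show P.d n k (t' (Q.d (n+1+1) (n+1) y)) = 0
      rw [ht'e, map_neg, GPHelp.d_d_apply P (n+1) n k, neg_zero]
  obtain ⟨θ, hθC, hθbeq⟩ := GPHelp.int_chain Jp Cp (show T (-1) from θb) hb upStep downStep
  -- build the totally acyclic complex R
  let RX : ℤ → ModuleCat.{u} A := fun n => ModuleCat.of A (↥(P.X n) × ↥(Q.X n))
  let dR : ∀ n : ℤ, RX (n+1) ⟶ RX n := fun n =>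
    ModuleCat.ofHom <| LinearMap.prod
      ((P.d (n+1) n).hom ∘ₗ LinearMap.fst A _ _ +
        (θ n).hom ∘ₗ LinearMap.snd A _ _)
      ((Q.d (n+1) n).hom ∘ₗ LinearMap.snd A _ _)
  have hsq : ∀ n, dR (n+1) ≫ dR n = 0 := by
    intro n
    refine ModuleCat.hom_ext <| LinearMap.ext fun xy => ?_
    obtain ⟨x, y⟩ := xy
    have hC : θ n (Q.d (n+1+1) (n+1) y) + P.d (n+1) n (θ (n+1) y) = 0 :=
      ConcreteCategory.congr_hom (hθC n) y
    show (P.d (n+1) n (P.d (n+1+1) (n+1) x + θ (n+1) y) + θ n (Q.d (n+1+1) (n+1) y),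
          Q.d (n+1) n (Q.d (n+1+1) (n+1) y)) = (0, 0)
    have h1 : P.d (n+1) n (P.d (n+1+1) (n+1) x) = 0 := GPHelp.d_d_apply P _ _ _ x
    have h2 : Q.d (n+1) n (Q.d (n+1+1) (n+1) y) = 0 := GPHelp.d_d_apply Q _ _ _ y
    refine Prod.ext ?_ h2
    show P.d (n+1) n (P.d (n+1+1) (n+1) x + θ (n+1) y) + θ n (Q.d (n+1+1) (n+1) y) = 0
    rw [map_add, h1, zero_add]
    rw [add_comm] at hC
    exact hC
  let R : ChainComplex (ModuleCat.{u} A) ℤ := ChainComplex.of RX dR hsq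
  refine (GPHelp.gp_iff_ker G).mpr ⟨R, ⟨?_, ?_, ?_⟩, ⟨?_⟩⟩
  · -- projectivity
    intro n
    haveI := hP.1 n; haveI := hQ.1 n
    exact Projective.of_iso (ModuleCat.biprodIsoProd (P.X n) (Q.X n)) inferInstance
  · -- exactness
    intro i
    obtain ⟨m, rfl⟩ : ∃ m, i = m + 1 := ⟨i - 1, by omega⟩
    rw [GPHelp.exactAt_iff_elem]
    intro xy hxy
    have hxy' : R.d (m+1) m xy = 0 :=
      (GPHelp.d_apply_congr (K := R) (show m+1-1 = m by omega) xy).mp hxy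
    have hd : R.d (m+1) m = dR m := ChainComplex.of_d RX dR m
    rw [hd] at hxy'
    obtain ⟨x, y⟩ := xy
    have hy0 : Q.d (m+1) m y = 0 := congrArg Prod.snd hxy'
    have hx0 : P.d (m+1) m x + θ m y = 0 := congrArg Prod.fst hxy'
    obtain ⟨y', hy'⟩ := exQ (m+1) y
      ((GPHelp.d_apply_congr (K := Q) (show m = m+1-1 by omega) y).mp hy0)
    have hC : θ m (Q.d (m+1+1) (m+1) y') + P.d (m+1) m (θ (m+1) y') = 0 :=
      ConcreteCategory.congr_hom (hθC m) y'
    have hP0 : P.d (m+1) m (x - θ (m+1) y') = 0 := by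
      rw [map_sub]
      have hA : P.d (m+1) m x = -(θ m y) := eq_neg_of_add_eq_zero_left hx0
      rw [hA, ← hy']
      have : θ m (Q.d (m+1+1) (m+1) y') = -(P.d (m+1) m (θ (m+1) y')) :=
        eq_neg_of_add_eq_zero_left hC
      rw [this, neg_neg, sub_self]
    obtain ⟨x', hx'⟩ := exP (m+1) (x - θ (m+1) y')
      ((GPHelp.d_apply_congr (K := P) (show m = m+1-1 by omega) _).mp hP0)
    refine ⟨(x', y'), ?_⟩
    have hd2 : R.d (m+1+1) (m+1) = dR (m+1) := ChainComplex.of_d RX dR (m+1)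
    rw [hd2]
    show (P.d (m+1+1) (m+1) x' + θ (m+1) y', Q.d (m+1+1) (m+1) y') = (x, y)
    rw [hx', hy']
    refine Prod.ext ?_ rfl
    show x - θ (m+1) y' + θ (m+1) y' = x
    rw [sub_add_cancel]
  · -- lifting property
    intro E hE i fh hfh
    obtain ⟨m, rfl⟩ : ∃ m, i = m + 1 := ⟨i - 1, by omega⟩
    have hfh' : dR (m+1) ≫ fh = 0 := by
      rw [← ChainComplex.of_d RX dR (m+1)]; exact hfh
    let fP : P.X (m+1) ⟶ E :=
      ModuleCat.ofHom ((fh).hom ∘ₗ LinearMap.inl A ↥(P.X (m+1)) ↥(Q.X (m+1)))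
    let fQ : Q.X (m+1) ⟶ E :=
      ModuleCat.ofHom ((fh).hom ∘ₗ LinearMap.inr A ↥(P.X (m+1)) ↥(Q.X (m+1)))
    have happ : ∀ (x : ↥(P.X (m+1))) (y : ↥(Q.X (m+1))),
        fh ((x, y) : ↥(RX (m+1))) = fP x + fQ y := by
      intro x y
      have hxy : ((x, y) : ↥(RX (m+1))) = (x, 0) + (0, y) := by simp
      rw [hxy, map_add]; rfl
    have hfP : P.d (m+1+1) (m+1) ≫ fP = 0 := by
      refine ModuleCat.hom_ext <| LinearMap.ext fun x => ?_
      have h0 := ConcreteCategory.congr_hom hfh' ((x, 0) : ↥(RX (m+1+1)))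
      have hz : dR (m+1) ((x, 0) : ↥(RX (m+1+1))) =
          ((P.d (m+1+1) (m+1) x, 0) : ↥(RX (m+1))) := by
        show (P.d (m+1+1) (m+1) x + θ (m+1) 0, Q.d (m+1+1) (m+1) 0) = _
        rw [map_zero, map_zero, add_zero]
      have h0' : fh (dR (m+1) ((x, 0) : ↥(RX (m+1+1)))) = 0 := h0
      rw [hz] at h0'
      show fh ((P.d (m+1+1) (m+1) x, 0) : ↥(RX (m+1))) = 0
      exact h0'
    obtain ⟨gP', hgP'⟩ := hP.2.2 E hE (m+1) fP hfP
    obtain ⟨gP, hgP⟩ := GPHelp.exists_comp_congr (K := P) (show m+1-1 = m by omega)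
      fP ⟨gP', hgP'⟩
    let fQ' : Q.X (m+1) ⟶ E :=
      ModuleCat.ofHom ((fQ).hom -
        (gP).hom ∘ₗ (θ m).hom)
    have hfQ' : Q.d (m+1+1) (m+1) ≫ fQ' = 0 := by
      refine ModuleCat.hom_ext <| LinearMap.ext fun z => ?_
      have h0 := ConcreteCategory.congr_hom hfh' ((0, z) : ↥(RX (m+1+1)))
      have hz : dR (m+1) ((0, z) : ↥(RX (m+1+1))) =
          ((θ (m+1) z, Q.d (m+1+1) (m+1) z) : ↥(RX (m+1))) := by
        show (P.d (m+1+1) (m+1) 0 + θ (m+1) z, Q.d (m+1+1) (m+1) z) = _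
        rw [map_zero, zero_add]
      have h0' : fh (dR (m+1) ((0, z) : ↥(RX (m+1+1)))) = 0 := h0
      rw [hz] at h0'
      have h1 : fP (θ (m+1) z) + fQ (Q.d (m+1+1) (m+1) z) = 0 := by
        rw [← happ]; exact h0'
      have hC : θ m (Q.d (m+1+1) (m+1) z) + P.d (m+1) m (θ (m+1) z) = 0 :=
        ConcreteCategory.congr_hom (hθC m) z
      show fQ (Q.d (m+1+1) (m+1) z) - gP (θ m (Q.d (m+1+1) (m+1) z)) = 0
      have h2 : θ m (Q.d (m+1+1) (m+1) z) = -(P.d (m+1) m (θ (m+1) z)) :=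
        eq_neg_of_add_eq_zero_left hC
      rw [h2, map_neg]
      have h3 : gP (P.d (m+1) m (θ (m+1) z)) = fP (θ (m+1) z) :=
        ConcreteCategory.congr_hom hgP (θ (m+1) z)
      rw [h3, sub_neg_eq_add, add_comm]
      exact h1
    obtain ⟨gQ', hgQ'⟩ := hQ.2.2 E hE (m+1) fQ' hfQ'
    obtain ⟨gQ, hgQ⟩ := GPHelp.exists_comp_congr (K := Q) (show m+1-1 = m by omega)
      fQ' ⟨gQ', hgQ'⟩
    have key : ∃ gg : R.X m ⟶ E, R.d (m+1) m ≫ gg = fh := by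
      refine ⟨ModuleCat.ofHom ((gP).hom ∘ₗ LinearMap.fst A ↥(P.X m) ↥(Q.X m) +
        (gQ).hom ∘ₗ LinearMap.snd A ↥(P.X m) ↥(Q.X m) :
          ↥(RX m) →ₗ[A] ↥E), ?_⟩
      rw [show R.d (m+1) m = dR m from ChainComplex.of_d RX dR m]
      refine ModuleCat.hom_ext <| LinearMap.ext fun xy => ?_
      obtain ⟨x, y⟩ := xy
      show gP (P.d (m+1) m x + θ m y) + gQ (Q.d (m+1) m y) = fh ((x, y) : ↥(RX (m+1)))
      rw [happ x y, map_add]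
      have h1 : gP (P.d (m+1) m x) = fP x := ConcreteCategory.congr_hom hgP x
      have h2 : gQ (Q.d (m+1) m y) = fQ y - gP (θ m y) := ConcreteCategory.congr_hom hgQ y
      rw [h1, h2]
      abel
    exact GPHelp.exists_comp_congr (K := R) (show m = m+1-1 by omega) fh key
  · -- the cycle identification
    have hd0 : R.d (-1+1) (-1) = dR (-1) := ChainComplex.of_d RX dR (-1)
    let Ψ0 : ↥G →ₗ[A] ↥(RX 0) :=
      LinearMap.prod (-φ) (kQ.subtype ∘ₗ eQ.toLinearMap ∘ₗ g.hom)
    have hΨmem : ∀ y, Ψ0 y ∈ LinearMap.ker (R.d (-1+1) (-1)).hom := by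
      intro y
      show R.d (-1+1) (-1) (Ψ0 y) = 0
      rw [hd0]
      have hz : Q.d 0 (-1) ((eQ (g y)).val) = 0 := (eQ (g y)).2
      show (P.d 0 (-1) (-(φ y)) + θ (-1) ((eQ (g y)).val),
            Q.d 0 (-1) ((eQ (g y)).val)) = 0
      have hθv : θ (-1) ((eQ (g y)).val) = τ (eQ.symm ⟨(eQ (g y)).val, hz⟩) := by
        rw [hθbeq]; exact hθb_ker _ hz
      have he : eQ.symm ⟨(eQ (g y)).val, hz⟩ = g y := by
        have : (⟨(eQ (g y)).val, hz⟩ : ↥kQ) = eQ (g y) := Subtype.ext rfl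
        rw [this, eQ.symm_apply_apply]
      refine Prod.ext ?_ hz
      show P.d 0 (-1) (-(φ y)) + θ (-1) ((eQ (g y)).val) = 0
      rw [hθv, he, hτ y, map_neg]
      show -(P.d 0 (-1) (φ y)) + P.d 0 (-1) (φ y) = 0
      rw [neg_add_cancel]
    let Ψ : ↥G →ₗ[A] ↥(LinearMap.ker (R.d (-1+1) (-1)).hom) := Ψ0.codRestrict _ hΨmem
    have hinj0 : ∀ y, Ψ y = 0 → y = 0 := by
      intro y hy
      have hy0 : Ψ0 y = 0 := congrArg Subtype.val hy
      have hy1 : -(φ y) = 0 := congrArg Prod.fst hy0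
      have hy2 : (eQ (g y)).val = 0 := congrArg Prod.snd hy0
      have hgy : g y = 0 := by
        have h4 : eQ (g y) = 0 := Subtype.ext hy2
        have := congrArg eQ.symm h4
        rwa [eQ.symm_apply_apply, map_zero] at this
      obtain ⟨a, rfl⟩ := hfg y hgy
      have hia : ι₁ a = 0 := by rw [← hφf a]; exact neg_eq_zero.mp hy1
      have ha0 : a = 0 := hι₁_inj (by rw [hia, map_zero])
      rw [ha0, map_zero]
    have hinj : Function.Injective Ψ := by
      intro y y' hyy
      have := hinj0 (y - y') (by rw [map_sub, hyy, sub_self])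
      exact sub_eq_zero.mp this
    have hsurj : Function.Surjective Ψ := by
      rintro ⟨xy, hmem⟩
      let x : ↥(P.X 0) := xy.1
      let y2 : ↥(Q.X 0) := xy.2
      have hmem' : dR (-1) ((x, y2) : ↥(RX 0)) = 0 := by
        rw [← hd0]; exact hmem
      have hy2 : Q.d 0 (-1) y2 = 0 := congrArg Prod.snd hmem'
      have hx2 : P.d 0 (-1) x + θ (-1) y2 = 0 := congrArg Prod.fst hmem'
      have hx2' : P.d 0 (-1) x + θb y2 = 0 := by
        have h6 := hx2
        rw [hθbeq] at h6
        exact h6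
      obtain ⟨y, hy⟩ := hg_surj (eQ.symm ⟨y2, hy2⟩)
      have hgy : eQ (g y) = ⟨y2, hy2⟩ := by rw [hy, eQ.apply_symm_apply]
      have hker : P.d 0 (-1) (x + φ y) = 0 := by
        rw [map_add]
        have hψ : P.d 0 (-1) (φ y) = ψ y := rfl
        rw [hψ, ← hτ y, hy, ← hθb_ker y2 hy2]
        exact hx2'
      let a := eP.symm ⟨x + φ y, hker⟩
      have ha : ι₁ a = x + φ y := by
        show ((eP (eP.symm ⟨x + φ y, hker⟩)).val) = x + φ y
        rw [eP.apply_symm_apply]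
      refine ⟨y - f a, ?_⟩
      apply Subtype.ext
      show Ψ0 (y - f a) = ((x, y2) : ↥(RX 0))
      refine Prod.ext ?_ ?_
      · show -(φ (y - f a)) = x
        rw [map_sub, hφf a, ha]
        abel
      · show (eQ (g (y - f a))).val = y2
        rw [map_sub, hgf a, sub_zero, hgy]
    exact (LinearEquiv.ofBijective Ψ ⟨hinj, hsurj⟩) ≪≫ₗ
      GPHelp.kerEquivOfEq R (show (-1:ℤ)+1 = 0 by norm_num) rfl
end
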